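/- arXiv:2103.01164 — 5 statements merged into one kernel-verified Lean document; each statement's English description precedes it below -/
import Mathlib

section
/- Assume C is injective (C·μ = 0 implies μ = 0). Suppose σ ∈ ℝⁿ and u ∈ ℝᵐ satisfy Cᵀ·σ = 0, Bᵀ·σ = F, and τᵀ·(A·σ + B·u − G) = 0 for every τ ∈ ℝⁿ with Cᵀ·τ = 0. Then there exists a unique λ ∈ ℝᵖ such that A·σ + B·u + C·λ = G; consequently (σ, u, λ) solves the hybrid system. -/
open Matrix

lemma CtC_surj (n p : ℕ) (C : Matrix (Fin n) (Fin p) ℝ)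
    (hC : ∀ μ : Fin p → ℝ, C *ᵥ μ = 0 → μ = 0) :
    Function.Surjective (fun x : Fin p → ℝ => (Cᵀ * C) *ᵥ x) := by
  have hinj : Function.Injective ((Cᵀ * C).mulVecLin) := by
    rw [← LinearMap.ker_eq_bot, LinearMap.ker_eq_bot']
    intro μ hμ
    simp only [mulVecLin_apply, ← mulVec_mulVec] at hμ
    have hz : (C *ᵥ μ) ⬝ᵥ (C *ᵥ μ) = 0 := by
      rw [dotProduct_mulVec, ← mulVec_transpose, hμ, zero_dotProduct]
    exact hC μ (by rwa [dotProduct_self_eq_zero] at hz)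
  have := (LinearMap.injective_iff_surjective (f := (Cᵀ * C).mulVecLin)).mp hinj
  exact this

/-- Any solution of the constrained discrete problem admits a unique Lagrange
multiplier `λ` making it a solution of the hybrid system. -/
theorem constrained_admits_unique_multiplier (n m p : ℕ)
    (A : Matrix (Fin n) (Fin n) ℝ) (B : Matrix (Fin n) (Fin m) ℝ)
    (C : Matrix (Fin n) (Fin p) ℝ) (G : Fin n → ℝ) (F : Fin m → ℝ)
    (hC : ∀ μ : Fin p → ℝ, C *ᵥ μ = 0 → μ = 0)
    (σ : Fin n → ℝ) (u : Fin m → ℝ)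
    (h3 : Cᵀ *ᵥ σ = 0)
    (h2 : Bᵀ *ᵥ σ = F)
    (h1 : ∀ τ : Fin n → ℝ, Cᵀ *ᵥ τ = 0 → τ ⬝ᵥ (A *ᵥ σ + B *ᵥ u - G) = 0) :
    ∃! lam : Fin p → ℝ, A *ᵥ σ + B *ᵥ u + C *ᵥ lam = G := by
  set v : Fin n → ℝ := G - (A *ᵥ σ + B *ᵥ u) with hv
  obtain ⟨lam0, hlam0⟩ := CtC_surj n p C hC (Cᵀ *ᵥ v)
  simp only at hlam0
  set w : Fin n → ℝ := v - C *ᵥ lam0 with hw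
  have hCw : Cᵀ *ᵥ w = 0 := by
    rw [hw, mulVec_sub, mulVec_mulVec, hlam0, sub_self]
  have hwv : w ⬝ᵥ v = 0 := by
    have := h1 w hCw
    have hvv : A *ᵥ σ + B *ᵥ u - G = -v := by rw [hv]; abel
    rw [hvv, dotProduct_neg, neg_eq_zero] at this
    exact this
  have hwC : w ⬝ᵥ (C *ᵥ lam0) = 0 := by
    rw [dotProduct_mulVec, ← mulVec_transpose, hCw, zero_dotProduct]
  have hww : w ⬝ᵥ w = 0 := by
    have h : w ⬝ᵥ (v - C *ᵥ lam0) = 0 := by rw [dotProduct_sub, hwv, hwC, sub_self]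
    rwa [← hw] at h
  have hw0 : w = 0 := by rwa [dotProduct_self_eq_zero] at hww
  have hv0 : C *ᵥ lam0 = v := by
    have := sub_eq_zero.mp hw0
    exact this.symm
  refine ⟨lam0, ?_, ?_⟩
  · show A *ᵥ σ + B *ᵥ u + C *ᵥ lam0 = G
    rw [hv0, hv]; abel
  · intro y hy
    apply sub_eq_zero.mp
    apply hC
    rw [mulVec_sub, hv0]
    have : C *ᵥ y = v := by
      rw [hv]; linear_combination (norm := module) hy
    rw [this, sub_self]
end

section
/- Assume A is symmetric positive definite and the combined injectivity condition holds: for all u ∈ ℝᵐ and λ ∈ ℝᵖ, B·u + C·λ = 0 implies u = 0 and λ = 0. Then for every G ∈ ℝⁿ and F ∈ ℝᵐ the hybrid system A·σ + B·u + C·λ = G, Bᵀ·σ = F, Cᵀ·σ = 0 has exactly one solution (σ, u, λ) ∈ ℝⁿ × ℝᵐ × ℝᵖ. -/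
open Matrix

/-- Unique solvability of the hybrid saddle-point system when `A` is symmetric
positive definite and the constraint block `[B C]` has trivial kernel. -/
theorem hybrid_system_unique_solvability (n m p : ℕ)
    (A : Matrix (Fin n) (Fin n) ℝ) (B : Matrix (Fin n) (Fin m) ℝ)
    (C : Matrix (Fin n) (Fin p) ℝ)
    (hAsymm : Aᵀ = A)
    (hApos : ∀ x : Fin n → ℝ, x ≠ 0 → 0 < x ⬝ᵥ (A *ᵥ x))
    (hBC : ∀ (u : Fin m → ℝ) (lam : Fin p → ℝ),
      B *ᵥ u + C *ᵥ lam = 0 → u = 0 ∧ lam = 0) :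
    ∀ (G : Fin n → ℝ) (F : Fin m → ℝ),
      ∃! s : (Fin n → ℝ) × (Fin m → ℝ) × (Fin p → ℝ),
        A *ᵥ s.1 + B *ᵥ s.2.1 + C *ᵥ s.2.2 = G ∧
        Bᵀ *ᵥ s.1 = F ∧
        Cᵀ *ᵥ s.1 = 0 := by
  intro G F
  let f : ((Fin n → ℝ) × (Fin m → ℝ) × (Fin p → ℝ)) →ₗ[ℝ]
      ((Fin n → ℝ) × (Fin m → ℝ) × (Fin p → ℝ)) :=
    { toFun := fun s => (A *ᵥ s.1 + B *ᵥ s.2.1 + C *ᵥ s.2.2, Bᵀ *ᵥ s.1, Cᵀ *ᵥ s.1)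
      map_add' := by
        intro x y
        simp [Matrix.mulVec_add, Prod.ext_iff]
        abel
      map_smul' := by
        intro c x
        simp [Matrix.mulVec_smul, Prod.ext_iff, smul_add] }
  have hinj : Function.Injective f := by
    rw [← LinearMap.ker_eq_bot, LinearMap.ker_eq_bot']
    rintro ⟨σ, u, lam⟩ hs
    have h1 : A *ᵥ σ + B *ᵥ u + C *ᵥ lam = 0 := congrArg Prod.fst hs
    have h2 : Bᵀ *ᵥ σ = 0 := congrArg (fun z => z.2.1) hs
    have h3 : Cᵀ *ᵥ σ = 0 := congrArg (fun z => z.2.2) hs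
    have hBu : σ ⬝ᵥ (B *ᵥ u) = 0 := by
      rw [Matrix.dotProduct_mulVec, ← Matrix.mulVec_transpose, h2, zero_dotProduct]
    have hCl : σ ⬝ᵥ (C *ᵥ lam) = 0 := by
      rw [Matrix.dotProduct_mulVec, ← Matrix.mulVec_transpose, h3, zero_dotProduct]
    have hdot : σ ⬝ᵥ (A *ᵥ σ) = 0 := by
      have := congrArg (fun v => σ ⬝ᵥ v) h1
      simpa [dotProduct_add, hBu, hCl] using this
    have hσ : σ = 0 := by
      by_contra h
      exact (hApos σ h).ne' hdot
    have hrest : B *ᵥ u + C *ᵥ lam = 0 := by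
      simpa [hσ] using h1
    obtain ⟨hu, hl⟩ := hBC u lam hrest
    simp [hσ, hu, hl, Prod.ext_iff]
  have hsurj : Function.Surjective f :=
    (LinearMap.injective_iff_surjective).mp hinj
  obtain ⟨s, hs⟩ := hsurj (G, F, 0)
  refine ⟨s, ?_, ?_⟩
  · refine ⟨congrArg Prod.fst hs, congrArg (fun z => z.2.1) hs,
      congrArg (fun z => z.2.2) hs⟩
  · rintro t ⟨ht1, ht2, ht3⟩
    apply hinj
    rw [hs]
    exact Prod.ext ht1 (Prod.ext ht2 ht3)
end

section
/- Assume A is symmetric positive definite and the combined injectivity condition holds: for all u ∈ ℝᵐ and λ ∈ ℝᵖ, B·u + C·λ = 0 implies u = 0 and λ = 0. Then the (m+p)×(m+p) block matrix M = [[Bᵀ·A⁻¹·B, Bᵀ·A⁻¹·C], [Cᵀ·A⁻¹·B, Cᵀ·A⁻¹·C]] is symmetric positive definite. -/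
open Matrix

/-!
Writing `D = [B | C]`, the condensed matrix is `Dᵀ A⁻¹ D`. The inverse of a positive definite
matrix is positive definite, and the injectivity hypothesis says exactly that `D` has trivial
kernel, so `xᵀ Dᵀ A⁻¹ D x = (D x)ᵀ A⁻¹ (D x) > 0` for `x ≠ 0`.
-/

namespace Matrix

variable {ι m₁ m₂ : Type*}

theorem posDef_iff_transpose_eq_and_dotProduct_mulVec_pos [Fintype ι] {R : Type*} [CommRing R]
    [PartialOrder R] [StarRing R] [TrivialStar R] {M : Matrix ι ι R} :
    M.PosDef ↔ Mᵀ = M ∧ ∀ x : ι → R, x ≠ 0 → 0 < x ⬝ᵥ (M *ᵥ x) := by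
  simp only [posDef_iff_dotProduct_mulVec, IsHermitian, conjTranspose_eq_transpose_of_trivial,
    star_trivial]

theorem fromBlocks_eq_transpose_fromCols_mul_mul_fromCols [Fintype ι] {R : Type*} [Semiring R]
    (S : Matrix ι ι R) (B : Matrix ι m₁ R) (C : Matrix ι m₂ R) :
    fromBlocks (Bᵀ * S * B) (Bᵀ * S * C) (Cᵀ * S * B) (Cᵀ * S * C) =
      (fromCols B C)ᵀ * S * fromCols B C := by
  rw [transpose_fromCols, fromRows_mul, fromRows_mul_fromCols]

theorem injective_mulVec_fromCols [Fintype m₁] [Fintype m₂] {R : Type*} [CommRing R]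
    {B : Matrix ι m₁ R} {C : Matrix ι m₂ R}
    (hBC : ∀ u v, B *ᵥ u + C *ᵥ v = 0 → u = 0 ∧ v = 0) :
    Function.Injective (fromCols B C).mulVec := by
  refine (injective_iff_map_eq_zero (fromCols B C).mulVecLin).2 fun x hx => ?_
  rw [mulVecLin_apply, ← Sum.elim_comp_inl_inr x, fromCols_mulVec_sumElim] at hx
  obtain ⟨hl, hr⟩ := hBC _ _ hx
  rw [← Sum.elim_comp_inl_inr x, hl, hr, Sum.elim_zero_zero]

end Matrix

/-- The condensed block matrix `[[BᵀA⁻¹B, BᵀA⁻¹C], [CᵀA⁻¹B, CᵀA⁻¹C]]` is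
symmetric positive definite. -/
theorem condensed_matrix_posDef (n m p : ℕ)
    (A : Matrix (Fin n) (Fin n) ℝ) (B : Matrix (Fin n) (Fin m) ℝ)
    (C : Matrix (Fin n) (Fin p) ℝ)
    (hAsymm : Aᵀ = A)
    (hApos : ∀ x : Fin n → ℝ, x ≠ 0 → 0 < x ⬝ᵥ (A *ᵥ x))
    (hBC : ∀ (u : Fin m → ℝ) (lam : Fin p → ℝ),
      B *ᵥ u + C *ᵥ lam = 0 → u = 0 ∧ lam = 0) :
    (Matrix.fromBlocks (Bᵀ * A⁻¹ * B) (Bᵀ * A⁻¹ * C)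
        (Cᵀ * A⁻¹ * B) (Cᵀ * A⁻¹ * C))ᵀ =
      Matrix.fromBlocks (Bᵀ * A⁻¹ * B) (Bᵀ * A⁻¹ * C)
        (Cᵀ * A⁻¹ * B) (Cᵀ * A⁻¹ * C) ∧
    ∀ x : (Fin m ⊕ Fin p) → ℝ, x ≠ 0 →
      0 < x ⬝ᵥ ((Matrix.fromBlocks (Bᵀ * A⁻¹ * B) (Bᵀ * A⁻¹ * C)
        (Cᵀ * A⁻¹ * B) (Cᵀ * A⁻¹ * C)) *ᵥ x) := by
  have hA : A.PosDef := posDef_iff_transpose_eq_and_dotProduct_mulVec_pos.2 ⟨hAsymm, hApos⟩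
  have hM : ((fromCols B C)ᵀ * A⁻¹ * fromCols B C).PosDef := by
    simpa only [conjTranspose_eq_transpose_of_trivial] using
      hA.inv.conjTranspose_mul_mul_same (injective_mulVec_fromCols hBC)
  rw [fromBlocks_eq_transpose_fromCols_mul_mul_fromCols]
  exact posDef_iff_transpose_eq_and_dotProduct_mulVec_pos.1 hM
end

section
/- Assume A is symmetric positive definite, B is injective (B·u = 0 implies u = 0), and the combined injectivity condition holds: for all u ∈ ℝᵐ and λ ∈ ℝᵖ, B·u + C·λ = 0 implies u = 0 and λ = 0. Then the Schur complement S := Cᵀ·A⁻¹·C − Cᵀ·A⁻¹·B·(Bᵀ·A⁻¹·B)⁻¹·Bᵀ·A⁻¹·C is a symmetric positive definite p×p matrix. -/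
/-!
With `G = [B C]`, the combined injectivity condition says that `G` is injective, so the Gram
matrix `Gᵀ A⁻¹ G` is positive definite. Its blocks are `BᵀA⁻¹B`, `BᵀA⁻¹C`, `CᵀA⁻¹B`, `CᵀA⁻¹C`,
so `S` is the Schur complement of its leading block. The Schur complement of a positive definite
block matrix is positive semidefinite, and invertible because the determinant of the block matrix
is the product of the determinants of the leading block and of `S`; hence it is positive definite.
-/

open Matrix
open scoped ComplexOrder

namespace Matrix

theorem PosDef.schur_complement₁₁ {𝕜 : Type*} [RCLike 𝕜] {m n : Type*} [Fintype m] [Fintype n]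
    [DecidableEq m] [DecidableEq n] {A : Matrix m m 𝕜} {B : Matrix m n 𝕜} {D : Matrix n n 𝕜}
    (h : (fromBlocks A B Bᴴ D).PosDef) : (D - Bᴴ * A⁻¹ * B).PosDef := by
  have hA : A.PosDef := h.submatrix Sum.inl_injective
  have := hA.isUnit.invertible
  refine ((PosDef.fromBlocks₁₁ B D hA).mp h.posSemidef).posDef_iff_isUnit.mpr ?_
  have hdet := h.det_pos.ne'
  rw [det_fromBlocks₁₁, invOf_eq_nonsing_inv] at hdet
  exact (isUnit_iff_isUnit_det _).mpr (right_ne_zero_of_mul hdet).isUnit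

theorem conjTranspose_fromCols_mul_mul_fromCols {R : Type*} [Semiring R] [StarRing R]
    {l m n : Type*} [Fintype l] {M : Matrix l l R} (hM : M.IsHermitian)
    (B : Matrix l m R) (C : Matrix l n R) :
    (fromCols B C)ᴴ * M * fromCols B C =
      fromBlocks (Bᴴ * M * B) (Bᴴ * M * C) (Bᴴ * M * C)ᴴ (Cᴴ * M * C) := by
  rw [conjTranspose_fromCols_eq_fromRows_conjTranspose, fromRows_mul, fromRows_mul_fromCols,
    conjTranspose_mul, conjTranspose_mul, hM.eq, conjTranspose_conjTranspose]
  simp only [Matrix.mul_assoc]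

theorem mulVec_fromCols_injective {R : Type*} [CommRing R] {l m n : Type*} [Fintype m]
    [Fintype n] {B : Matrix l m R} {C : Matrix l n R}
    (h : ∀ u v, B *ᵥ u + C *ᵥ v = 0 → u = 0 ∧ v = 0) :
    Function.Injective (fromCols B C).mulVec := by
  refine (injective_iff_map_eq_zero (fromCols B C).mulVecLin).mpr fun w hw => ?_
  rw [mulVecLin_apply, fromCols_mulVec] at hw
  obtain ⟨hl, hr⟩ := h _ _ hw
  rw [← Sum.elim_comp_inl_inr w, hl, hr]
  exact Sum.elim_zero_zero

end Matrix

theorem schur_complement_posDef_general (n m p : ℕ)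
    (A : Matrix (Fin n) (Fin n) ℝ) (B : Matrix (Fin n) (Fin m) ℝ)
    (C : Matrix (Fin n) (Fin p) ℝ)
    (hAsymm : Aᵀ = A)
    (hApos : ∀ x : Fin n → ℝ, x ≠ 0 → 0 < x ⬝ᵥ (A *ᵥ x))
    (hBC : ∀ (u : Fin m → ℝ) (lam : Fin p → ℝ),
      B *ᵥ u + C *ᵥ lam = 0 → u = 0 ∧ lam = 0)
    (S : Matrix (Fin p) (Fin p) ℝ)
    (hS : S = Cᵀ * A⁻¹ * C - Cᵀ * A⁻¹ * B * (Bᵀ * A⁻¹ * B)⁻¹ * (Bᵀ * A⁻¹ * C)) :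
    Sᵀ = S ∧ ∀ lam : Fin p → ℝ, lam ≠ 0 → 0 < lam ⬝ᵥ (S *ᵥ lam) := by
  have hA : A.PosDef := .of_dotProduct_mulVec_pos hAsymm (by simpa using hApos)
  have hGram := hA.inv.conjTranspose_mul_mul_same (mulVec_fromCols_injective hBC)
  rw [conjTranspose_fromCols_mul_mul_fromCols hA.inv.isHermitian] at hGram
  have hSpos : S.PosDef := by
    have hSchur := hGram.schur_complement₁₁
    rw [conjTranspose_mul, conjTranspose_mul, conjTranspose_conjTranspose,
      hA.inv.isHermitian.eq] at hSchur
    simpa only [hS, conjTranspose_eq_transpose_of_trivial, Matrix.mul_assoc] using hSchur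
  exact ⟨hSpos.isHermitian, fun lam hlam => by simpa using hSpos.dotProduct_mulVec_pos hlam⟩

/-- The Schur complement `S = CᵀA⁻¹C − CᵀA⁻¹B (BᵀA⁻¹B)⁻¹ BᵀA⁻¹C` is
symmetric positive definite. -/
theorem schur_complement_posDef (n m p : ℕ)
    (A : Matrix (Fin n) (Fin n) ℝ) (B : Matrix (Fin n) (Fin m) ℝ)
    (C : Matrix (Fin n) (Fin p) ℝ)
    (hAsymm : Aᵀ = A)
    (hApos : ∀ x : Fin n → ℝ, x ≠ 0 → 0 < x ⬝ᵥ (A *ᵥ x))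
    (hB : ∀ u : Fin m → ℝ, B *ᵥ u = 0 → u = 0)
    (hBC : ∀ (u : Fin m → ℝ) (lam : Fin p → ℝ),
      B *ᵥ u + C *ᵥ lam = 0 → u = 0 ∧ lam = 0)
    (S : Matrix (Fin p) (Fin p) ℝ)
    (hS : S = Cᵀ * A⁻¹ * C - Cᵀ * A⁻¹ * B * (Bᵀ * A⁻¹ * B)⁻¹ * (Bᵀ * A⁻¹ * C)) :
    Sᵀ = S ∧ ∀ lam : Fin p → ℝ, lam ≠ 0 → 0 < lam ⬝ᵥ (S *ᵥ lam) :=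
  schur_complement_posDef_general n m p A B C hAsymm hApos hBC S hS
end

section
/- Assume A is symmetric positive definite, B is injective (B·u = 0 implies u = 0), and the combined injectivity condition holds: B·u + C·λ = 0 implies u = 0 and λ = 0. Define S := Cᵀ·A⁻¹·C − Cᵀ·A⁻¹·B·(Bᵀ·A⁻¹·B)⁻¹·Bᵀ·A⁻¹·C and R̂ := Cᵀ·A⁻¹·G − Cᵀ·A⁻¹·B·(Bᵀ·A⁻¹·B)⁻¹·(Bᵀ·A⁻¹·G − F). Set λ := S⁻¹·R̂, u := (Bᵀ·A⁻¹·B)⁻¹·(Bᵀ·A⁻¹·G − F − Bᵀ·A⁻¹·C·λ), and σ := A⁻¹·(G − B·u − C·λ). Then (σ, u, λ) is the unique solution of the hybrid system A·σ + B·u + C·λ = G, Bᵀ·σ = F, Cᵀ·σ = 0. -/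
/-!
Back-substitution solves the first two equations for every `λ` and turns the third into
`Cᵀσ = R̂ - Sλ`, so `λ = S⁻¹R̂` yields a solution. Everything else rests on the homogeneous
system: if `Aσ + Bu + Cλ = 0` and `Bᵀσ = Cᵀσ = 0`, then `σᵀAσ = -(Bᵀσ)ᵀu - (Cᵀσ)ᵀλ = 0`, so
`σ = 0`, and then `u = λ = 0` by injectivity of `[B C]`. This gives uniqueness, and, applied to
back-substitution with `G = F = 0`, injectivity of `S`; the same argument without `C` shows that
`BᵀA⁻¹B` is injective.
-/

open Matrix

namespace Matrix

section CommRing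

variable {R ι κ μ : Type*} [CommRing R] [Fintype ι] [Fintype κ] [Fintype μ]

theorem eq_zero_of_saddlePoint_eq_zero {A : Matrix ι ι R} {B : Matrix ι κ R}
    (hA : ∀ x, x ≠ 0 → x ⬝ᵥ A *ᵥ x ≠ 0) (hB : ∀ u, B *ᵥ u = 0 → u = 0)
    {σ : ι → R} {u : κ → R} (h₁ : A *ᵥ σ + B *ᵥ u = 0) (h₂ : Bᵀ *ᵥ σ = 0) :
    σ = 0 ∧ u = 0 := by
  have hquad : σ ⬝ᵥ A *ᵥ σ = 0 := by
    have := congrArg (σ ⬝ᵥ ·) h₁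
    simpa [dotProduct_add, dotProduct_mulVec σ B, ← mulVec_transpose, h₂] using this
  obtain rfl : σ = 0 := by_contra fun hne => hA σ hne hquad
  exact ⟨rfl, hB u (by simpa using h₁)⟩

theorem eq_zero_of_hybrid_eq_zero {A : Matrix ι ι R} {B : Matrix ι κ R} {C : Matrix ι μ R}
    (hA : ∀ x, x ≠ 0 → x ⬝ᵥ A *ᵥ x ≠ 0)
    (hBC : ∀ u lam, B *ᵥ u + C *ᵥ lam = 0 → u = 0 ∧ lam = 0)
    {σ : ι → R} {u : κ → R} {lam : μ → R} (h₁ : A *ᵥ σ + B *ᵥ u + C *ᵥ lam = 0)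
    (h₂ : Bᵀ *ᵥ σ = 0) (h₃ : Cᵀ *ᵥ σ = 0) :
    σ = 0 ∧ u = 0 ∧ lam = 0 := by
  have hBC' : ∀ v, fromCols B C *ᵥ v = 0 → v = 0 := by
    intro v hv
    obtain ⟨hl, hr⟩ := hBC _ _ ((fromCols_mulVec B C v).symm.trans hv)
    ext (i | i)
    exacts [congrFun hl i, congrFun hr i]
  obtain ⟨hσ, hv⟩ := eq_zero_of_saddlePoint_eq_zero hA hBC' (u := Sum.elim u lam)
    (by rw [fromCols_mulVec_sumElim, ← add_assoc, h₁])
    (by rw [transpose_fromCols, fromRows_mulVec, h₂, h₃, Sum.elim_zero_zero])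
  exact ⟨hσ, funext fun i => congrFun hv (.inl i), funext fun i => congrFun hv (.inr i)⟩

theorem eq_of_hybrid_eq {A : Matrix ι ι R} {B : Matrix ι κ R} {C : Matrix ι μ R}
    (hA : ∀ x, x ≠ 0 → x ⬝ᵥ A *ᵥ x ≠ 0)
    (hBC : ∀ u lam, B *ᵥ u + C *ᵥ lam = 0 → u = 0 ∧ lam = 0)
    {σ σ' : ι → R} {u u' : κ → R} {lam lam' : μ → R}
    (h₁ : A *ᵥ σ + B *ᵥ u + C *ᵥ lam = A *ᵥ σ' + B *ᵥ u' + C *ᵥ lam')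
    (h₂ : Bᵀ *ᵥ σ = Bᵀ *ᵥ σ') (h₃ : Cᵀ *ᵥ σ = Cᵀ *ᵥ σ') :
    σ = σ' ∧ u = u' ∧ lam = lam' := by
  obtain ⟨hσ, hu, hlam⟩ := eq_zero_of_hybrid_eq_zero hA hBC (σ := σ - σ') (u := u - u')
    (lam := lam - lam') (by rw [mulVec_sub, mulVec_sub, mulVec_sub, ← sub_eq_zero.2 h₁]; abel)
    (by rw [mulVec_sub, h₂, sub_self]) (by rw [mulVec_sub, h₃, sub_self])
  exact ⟨sub_eq_zero.1 hσ, sub_eq_zero.1 hu, sub_eq_zero.1 hlam⟩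

end CommRing

section Field

variable {K ι κ μ : Type*} [Field K] [Fintype ι] [Fintype κ] [Fintype μ] [DecidableEq ι]

theorem isUnit_det_of_dotProduct_mulVec_ne_zero {A : Matrix ι ι K}
    (hA : ∀ x, x ≠ 0 → x ⬝ᵥ A *ᵥ x ≠ 0) : IsUnit A.det := by
  rw [← isUnit_iff_isUnit_det, ← mulVec_injective_iff_isUnit]
  refine fun x y hxy => sub_eq_zero.1 (by_contra fun hne => hA _ hne ?_)
  rw [mulVec_sub, hxy, sub_self, dotProduct_zero]

theorem isUnit_det_of_mulVec_eq_zero {A : Matrix ι ι K} (hA : ∀ x, A *ᵥ x = 0 → x = 0) :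
    IsUnit A.det :=
  isUnit_iff_ne_zero.2 fun hdet =>
    let ⟨x, hx, hAx⟩ := exists_mulVec_eq_zero_iff.2 hdet
    hx (hA x hAx)

theorem mulVec_nonsing_inv_mulVec {A : Matrix ι ι K} (hA : IsUnit A.det) (v : ι → K) :
    A *ᵥ (A⁻¹ *ᵥ v) = v := by
  rw [mulVec_mulVec, mul_nonsing_inv A hA, one_mulVec]

theorem isUnit_det_transpose_mul_inv_mul {A : Matrix ι ι K} {B : Matrix ι κ K}
    [DecidableEq κ] (hA : ∀ x, x ≠ 0 → x ⬝ᵥ A *ᵥ x ≠ 0) (hB : ∀ u, B *ᵥ u = 0 → u = 0) :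
    IsUnit (Bᵀ * A⁻¹ * B).det := by
  refine isUnit_det_of_mulVec_eq_zero fun y hy => neg_eq_zero.1 ?_
  refine (eq_zero_of_saddlePoint_eq_zero hA hB (σ := A⁻¹ *ᵥ B *ᵥ y) (u := -y) ?_ ?_).2
  · rw [mulVec_nonsing_inv_mulVec (isUnit_det_of_dotProduct_mulVec_ne_zero hA), mulVec_neg,
      add_neg_cancel]
  · rwa [mulVec_mulVec, mulVec_mulVec]

theorem hybrid_backSubstitution [DecidableEq κ] {A : Matrix ι ι K} {B : Matrix ι κ K}
    {C : Matrix ι μ K} {G : ι → K} {F : κ → K} (hA : IsUnit A.det)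
    (hM : IsUnit (Bᵀ * A⁻¹ * B).det) {S : Matrix μ μ K} {Rhat : μ → K}
    (hS : S = Cᵀ * A⁻¹ * C - Cᵀ * A⁻¹ * B * (Bᵀ * A⁻¹ * B)⁻¹ * (Bᵀ * A⁻¹ * C))
    (hRhat : Rhat = (Cᵀ * A⁻¹) *ᵥ G -
      (Cᵀ * A⁻¹ * B * (Bᵀ * A⁻¹ * B)⁻¹) *ᵥ ((Bᵀ * A⁻¹) *ᵥ G - F))
    (lam : μ → K) {u : κ → K} {σ : ι → K}
    (hu : u = (Bᵀ * A⁻¹ * B)⁻¹ *ᵥ ((Bᵀ * A⁻¹) *ᵥ G - F - (Bᵀ * A⁻¹ * C) *ᵥ lam))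
    (hσ : σ = A⁻¹ *ᵥ (G - B *ᵥ u - C *ᵥ lam)) :
    A *ᵥ σ + B *ᵥ u + C *ᵥ lam = G ∧ Bᵀ *ᵥ σ = F ∧ Cᵀ *ᵥ σ = Rhat - S *ᵥ lam := by
  have hMu : (Bᵀ * A⁻¹ * B) *ᵥ u = (Bᵀ * A⁻¹) *ᵥ G - F - (Bᵀ * A⁻¹ * C) *ᵥ lam := by
    rw [hu, mulVec_nonsing_inv_mulVec hM]
  have hCu : (Cᵀ * A⁻¹ * B) *ᵥ u =
      (Cᵀ * A⁻¹ * B * (Bᵀ * A⁻¹ * B)⁻¹) *ᵥ ((Bᵀ * A⁻¹) *ᵥ G - F - (Bᵀ * A⁻¹ * C) *ᵥ lam) := by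
    rw [hu, mulVec_mulVec]
  refine ⟨?_, ?_, ?_⟩
  · rw [hσ, mulVec_nonsing_inv_mulVec hA]
    abel
  · rw [hσ, mulVec_mulVec, mulVec_sub, mulVec_sub, mulVec_mulVec, mulVec_mulVec, hMu]
    abel
  · rw [hσ, mulVec_mulVec, mulVec_sub, mulVec_sub, mulVec_mulVec, mulVec_mulVec, hCu, hS, hRhat,
      sub_mulVec, ← mulVec_mulVec lam _ (Bᵀ * A⁻¹ * C), mulVec_sub _ _ ((Bᵀ * A⁻¹ * C) *ᵥ lam)]
    abel

theorem isUnit_det_hybridSchurComplement [DecidableEq κ] [DecidableEq μ] {A : Matrix ι ι K}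
    {B : Matrix ι κ K} {C : Matrix ι μ K} (hA : ∀ x, x ≠ 0 → x ⬝ᵥ A *ᵥ x ≠ 0)
    (hB : ∀ u, B *ᵥ u = 0 → u = 0) (hBC : ∀ u lam, B *ᵥ u + C *ᵥ lam = 0 → u = 0 ∧ lam = 0)
    {S : Matrix μ μ K}
    (hS : S = Cᵀ * A⁻¹ * C - Cᵀ * A⁻¹ * B * (Bᵀ * A⁻¹ * B)⁻¹ * (Bᵀ * A⁻¹ * C)) :
    IsUnit S.det := by
  refine isUnit_det_of_mulVec_eq_zero fun x hx => ?_
  obtain ⟨h₁, h₂, h₃⟩ := hybrid_backSubstitution (G := 0) (F := 0)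
    (isUnit_det_of_dotProduct_mulVec_ne_zero hA) (isUnit_det_transpose_mul_inv_mul hA hB)
    hS rfl x rfl rfl
  exact (eq_zero_of_hybrid_eq_zero hA hBC h₁ h₂ (by simpa [hx] using h₃)).2.2

end Field

end Matrix

theorem hybridization_algorithm_correct_general (n m p : ℕ)
    (A : Matrix (Fin n) (Fin n) ℝ) (B : Matrix (Fin n) (Fin m) ℝ)
    (C : Matrix (Fin n) (Fin p) ℝ) (G : Fin n → ℝ) (F : Fin m → ℝ)
    (hApos : ∀ x : Fin n → ℝ, x ≠ 0 → 0 < x ⬝ᵥ (A *ᵥ x))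
    (hB : ∀ u : Fin m → ℝ, B *ᵥ u = 0 → u = 0)
    (hBC : ∀ (u : Fin m → ℝ) (lam : Fin p → ℝ),
      B *ᵥ u + C *ᵥ lam = 0 → u = 0 ∧ lam = 0)
    (S : Matrix (Fin p) (Fin p) ℝ) (Rhat : Fin p → ℝ)
    (hS : S = Cᵀ * A⁻¹ * C - Cᵀ * A⁻¹ * B * (Bᵀ * A⁻¹ * B)⁻¹ * (Bᵀ * A⁻¹ * C))
    (hRhat : Rhat = (Cᵀ * A⁻¹) *ᵥ G -
      (Cᵀ * A⁻¹ * B * (Bᵀ * A⁻¹ * B)⁻¹) *ᵥ ((Bᵀ * A⁻¹) *ᵥ G - F))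
    (lam : Fin p → ℝ) (u : Fin m → ℝ) (σ : Fin n → ℝ)
    (hlam : lam = S⁻¹ *ᵥ Rhat)
    (hu : u = (Bᵀ * A⁻¹ * B)⁻¹ *ᵥ ((Bᵀ * A⁻¹) *ᵥ G - F - (Bᵀ * A⁻¹ * C) *ᵥ lam))
    (hσ : σ = A⁻¹ *ᵥ (G - B *ᵥ u - C *ᵥ lam)) :
    (A *ᵥ σ + B *ᵥ u + C *ᵥ lam = G ∧ Bᵀ *ᵥ σ = F ∧ Cᵀ *ᵥ σ = 0) ∧
    (∀ (σ' : Fin n → ℝ) (u' : Fin m → ℝ) (lam' : Fin p → ℝ),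
      A *ᵥ σ' + B *ᵥ u' + C *ᵥ lam' = G → Bᵀ *ᵥ σ' = F → Cᵀ *ᵥ σ' = 0 →
      σ' = σ ∧ u' = u ∧ lam' = lam) := by
  have hA : ∀ x, x ≠ 0 → x ⬝ᵥ A *ᵥ x ≠ 0 := fun x hx => (hApos x hx).ne'
  have hSlam : S *ᵥ lam = Rhat := by
    rw [hlam, mulVec_nonsing_inv_mulVec (isUnit_det_hybridSchurComplement hA hB hBC hS)]
  obtain ⟨h₁, h₂, h₃⟩ := hybrid_backSubstitution (isUnit_det_of_dotProduct_mulVec_ne_zero hA)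
    (isUnit_det_transpose_mul_inv_mul hA hB) hS hRhat lam hu hσ
  rw [hSlam, sub_self] at h₃
  exact ⟨⟨h₁, h₂, h₃⟩, fun σ' u' lam' h₁' h₂' h₃' =>
    eq_of_hybrid_eq hA hBC (h₁'.trans h₁.symm) (h₂'.trans h₂.symm) (h₃'.trans h₃.symm)⟩

/-- Correctness of the full hybridization/static condensation algorithm:
solving for the Lagrange multiplier, then recovering displacement and stress,
yields the unique solution of the hybrid system. -/
theorem hybridization_algorithm_correct (n m p : ℕ)
    (A : Matrix (Fin n) (Fin n) ℝ) (B : Matrix (Fin n) (Fin m) ℝ)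
    (C : Matrix (Fin n) (Fin p) ℝ) (G : Fin n → ℝ) (F : Fin m → ℝ)
    (hAsymm : Aᵀ = A)
    (hApos : ∀ x : Fin n → ℝ, x ≠ 0 → 0 < x ⬝ᵥ (A *ᵥ x))
    (hB : ∀ u : Fin m → ℝ, B *ᵥ u = 0 → u = 0)
    (hBC : ∀ (u : Fin m → ℝ) (lam : Fin p → ℝ),
      B *ᵥ u + C *ᵥ lam = 0 → u = 0 ∧ lam = 0)
    (S : Matrix (Fin p) (Fin p) ℝ) (Rhat : Fin p → ℝ)
    (hS : S = Cᵀ * A⁻¹ * C - Cᵀ * A⁻¹ * B * (Bᵀ * A⁻¹ * B)⁻¹ * (Bᵀ * A⁻¹ * C))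
    (hRhat : Rhat = (Cᵀ * A⁻¹) *ᵥ G -
      (Cᵀ * A⁻¹ * B * (Bᵀ * A⁻¹ * B)⁻¹) *ᵥ ((Bᵀ * A⁻¹) *ᵥ G - F))
    (lam : Fin p → ℝ) (u : Fin m → ℝ) (σ : Fin n → ℝ)
    (hlam : lam = S⁻¹ *ᵥ Rhat)
    (hu : u = (Bᵀ * A⁻¹ * B)⁻¹ *ᵥ ((Bᵀ * A⁻¹) *ᵥ G - F - (Bᵀ * A⁻¹ * C) *ᵥ lam))
    (hσ : σ = A⁻¹ *ᵥ (G - B *ᵥ u - C *ᵥ lam)) :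
    (A *ᵥ σ + B *ᵥ u + C *ᵥ lam = G ∧ Bᵀ *ᵥ σ = F ∧ Cᵀ *ᵥ σ = 0) ∧
    (∀ (σ' : Fin n → ℝ) (u' : Fin m → ℝ) (lam' : Fin p → ℝ),
      A *ᵥ σ' + B *ᵥ u' + C *ᵥ lam' = G → Bᵀ *ᵥ σ' = F → Cᵀ *ᵥ σ' = 0 →
      σ' = σ ∧ u' = u ∧ lam' = lam) :=
  hybridization_algorithm_correct_general n m p A B C G F hApos hB hBC S Rhat hS hRhat lam u σ hlam
    hu hσ
end
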